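/- arXiv:math/0608238 — 5 statements merged into one kernel-verified Lean document; each statement's English description precedes it below -/
import Mathlib

section
/- Let G: ℕ → [0,1] be nonincreasing with lim_{j→∞} j·G(j) = 0, and fix p ∈ (0,1) and j ≥ 1. Define for i > j: a_i = ∏_{k=j+1}^{i}(1 - p·G(k))^{j}. Then ∑_{i > j} a_i = ∞. -/
/-!
Write `a_i` for the `i`-th term. Its successive ratios are `(1 - p G(k))^j ≥ 1 - j p G(k)`
(Bernoulli), and since `k G(k) → 0` this is eventually at least `1 - 1/(i+1) = i/(i+1)`.
Hence `i a_i` is eventually nondecreasing, so `a_i ≥ c / i` with `c > 0`, and the series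
dominates a multiple of the harmonic series.
-/

open Filter

theorem not_summable_of_eventually_natCast_mul_le_succ {f : ℕ → ℝ} (hf : ∀ n, 0 < f n)
    (h : ∀ᶠ n : ℕ in atTop, (n : ℝ) * f n ≤ (n + 1) * f (n + 1)) : ¬ Summable f := by
  obtain ⟨N, hN⟩ := eventually_atTop.mp h
  have hmono : MonotoneOn (fun n : ℕ => (n : ℝ) * f n) (Set.Ici (N + 1)) :=
    monotoneOn_nat_Ici_of_le_succ fun n hn => by exact_mod_cast hN n (by omega)
  set c := ((N + 1 : ℕ) : ℝ) * f (N + 1)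
  have hc : 0 < c := mul_pos (by positivity) (hf _)
  have hlower : ∀ n ≥ N + 1, c * (n : ℝ)⁻¹ ≤ f n := fun n hn => by
    rw [mul_inv_le_iff₀ (Nat.cast_pos.mpr (by omega)), mul_comm (f n)]
    exact hmono Set.self_mem_Ici hn hn
  intro hsum
  refine Real.not_summable_natCast_inv ((summable_mul_left_iff hc.ne').mp ?_)
  refine hsum.of_norm_bounded_eventually ?_
  rw [Nat.cofinite_eq_atTop]
  filter_upwards [eventually_ge_atTop (N + 1)] with n hn
  rw [Real.norm_of_nonneg (by positivity)]
  exact hlower n hn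

theorem natCast_le_succ_mul_one_sub_pow {x : ℝ} {n : ℕ} (j : ℕ) (hx : x ≤ 1)
    (h : (n + 1) * (j * x) ≤ 1) : (n : ℝ) ≤ (n + 1) * (1 - x) ^ j := by
  have hbernoulli : 1 - j * x ≤ (1 - x) ^ j := by
    simpa [sub_eq_add_neg] using one_add_mul_le_pow (a := -x) (by linarith) j
  nlinarith

theorem stmt_6_general (G : ℕ → ℝ) (hG0 : ∀ k, 0 ≤ G k) (hG1 : ∀ k, G k ≤ 1)
    (htail : Tendsto (fun k : ℕ => (k : ℝ) * G k) atTop (nhds 0))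
    (p : ℝ) (hp : 0 < p) (hp1 : p < 1) (j : ℕ) :
    ¬ Summable (fun i : ℕ =>
        ∏ k ∈ Finset.Icc (j + 1) (j + 1 + i), (1 - p * G k) ^ j) := by
  have hfactor : ∀ k, 0 < 1 - p * G k := fun k => by nlinarith [hG0 k, hG1 k]
  refine not_summable_of_eventually_natCast_mul_le_succ
    (fun i => Finset.prod_pos fun k _ => pow_pos (hfactor k) j) ?_
  have hsmall : ∀ᶠ k : ℕ in atTop, j * p * (k * G k) < 1 := by
    have := htail.const_mul ((j : ℝ) * p)
    rw [mul_zero] at this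
    exact this.eventually_lt_const one_pos
  -- the `(i + 1)`-st ratio involves `G (i + j + 2)`, and `i + 1 ≤ i + j + 2`
  filter_upwards [(tendsto_add_atTop_nat (j + 2)).eventually hsmall] with i hi
  have hratio : (i : ℝ) ≤ (i + 1) * (1 - p * G (i + (j + 2))) ^ j := by
    refine natCast_le_succ_mul_one_sub_pow j (by linarith [hfactor (i + (j + 2))]) ?_
    have hG : ((i : ℝ) + 1) * G (i + (j + 2)) ≤
        ((i + (j + 2) : ℕ) : ℝ) * G (i + (j + 2)) := by
      gcongr
      · exact hG0 _
      · push_cast; linarith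
    nlinarith [mul_le_mul_of_nonneg_left hG (by positivity : (0 : ℝ) ≤ j * p)]
  rw [show j + 1 + (i + 1) = j + 1 + i + 1 by ring, Finset.prod_Icc_succ_top (by omega),
    mul_left_comm, mul_comm (i : ℝ), show j + 1 + i + 1 = i + (j + 2) by ring]
  exact mul_le_mul_of_nonneg_left hratio
    (Finset.prod_nonneg fun k _ => (pow_pos (hfactor k) j).le)

/-- If `G : ℕ → [0,1]` is nonincreasing with `j·G(j) → 0`, `p ∈ (0,1)` and `j ≥ 1`,
then the series `∑_{i > j} ∏_{k=j+1}^{i} (1 - p·G(k))^j` diverges. -/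
theorem stmt_6 (G : ℕ → ℝ) (hG0 : ∀ k, 0 ≤ G k) (hG1 : ∀ k, G k ≤ 1)
    (hmono : Antitone G) (htail : Tendsto (fun k : ℕ => (k : ℝ) * G k) atTop (nhds 0))
    (p : ℝ) (hp : 0 < p) (hp1 : p < 1) (j : ℕ) (hj : 1 ≤ j) :
    ¬ Summable (fun i : ℕ =>
        ∏ k ∈ Finset.Icc (j + 1) (j + 1 + i), (1 - p * G k) ^ j) :=
  stmt_6_general G hG0 hG1 htail p hp hp1 j
end

section
/- Let G: ℕ → [0,1] be nonincreasing with liminf_{j→∞} j·G(j) > η > 0, and fix p ∈ (0,1) and an integer j with p·j·η > 1. Define for i > j ≥ N (N large enough that k·G(k) > η for k ≥ N): b_i = ∏_{k=j+1}^{i}(1 - p·G(k))^{j}. Then ∑_{i > j} b_i < ∞. -/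
/-!
Put `s = p·j·η > 1`. For `k > j ≥ N` we have `k·G(k) > η`, so each factor satisfies
`(1 - p·G(k))^j ≤ exp(-s/k) ≤ (1 + 1/k)^(-s)`. The product of the `1 + 1/k` telescopes, so the
`i`-th term is at most `((j+1)/(j+2+i))^s`, a tail of the convergent `s`-series.
-/

open Filter Real Finset

theorem one_sub_pow_le_exp_neg_mul {x : ℝ} (hx : x ≤ 1) (n : ℕ) :
    (1 - x) ^ n ≤ exp (-(n * x)) := by
  calc (1 - x) ^ n ≤ exp (-x) ^ n := pow_le_pow_left₀ (by linarith) (one_sub_le_exp_neg x) n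
    _ = exp (-(n * x)) := by rw [← exp_nat_mul]; ring_nf

theorem exp_neg_div_le_one_add_inv_rpow_neg {k s : ℝ} (hk : 0 < k) (hs : 0 ≤ s) :
    exp (-(s / k)) ≤ (1 + k⁻¹) ^ (-s) := by
  calc exp (-(s / k)) = exp k⁻¹ ^ (-s) := by rw [← exp_mul]; ring_nf
    _ ≤ (1 + k⁻¹) ^ (-s) := by
      refine rpow_le_rpow_of_nonpos (by positivity) ?_ (by linarith)
      linarith [add_one_le_exp k⁻¹]

theorem prod_Icc_one_add_inv (m i : ℕ) :
    ∏ k ∈ Icc (m + 1) (m + 1 + i), (1 + (k : ℝ)⁻¹) = (m + 2 + i) / (m + 1) := by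
  induction i with
  | zero => rw [add_zero, Icc_self, prod_singleton]; push_cast; field_simp; ring
  | succ i ih =>
    rw [← add_assoc, prod_Icc_succ_top (by omega), ih]
    push_cast
    field_simp
    ring

theorem summable_div_rpow_neg {s : ℝ} (hs : 1 < s) (m : ℕ) :
    Summable fun i : ℕ => (((m + 2 + i : ℕ) : ℝ) / (m + 1)) ^ (-s) := by
  have hp : Summable fun n : ℕ => (n : ℝ) ^ (-s) := summable_nat_rpow.2 (by linarith)
  refine (((summable_nat_add_iff (m + 2)).2 hp).mul_right (((m : ℝ) + 1) ^ s)).congr fun i => ?_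
  rw [div_rpow (by positivity) (by positivity), rpow_neg (by positivity : (0 : ℝ) ≤ m + 1),
    div_inv_eq_mul, add_comm i]

theorem summable_prod_Icc_of_le_one_add_inv_rpow_neg {f : ℕ → ℝ} {s : ℝ} (hs : 1 < s) (m : ℕ)
    (hf0 : ∀ k, m < k → 0 ≤ f k) (hf : ∀ k, m < k → f k ≤ (1 + (k : ℝ)⁻¹) ^ (-s)) :
    Summable fun i : ℕ => ∏ k ∈ Icc (m + 1) (m + 1 + i), f k := by
  refine (summable_div_rpow_neg hs m).of_nonneg_of_le
    (fun i => prod_nonneg fun k hk => hf0 k (mem_Icc.1 hk).1) fun i => ?_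
  calc ∏ k ∈ Icc (m + 1) (m + 1 + i), f k
      ≤ ∏ k ∈ Icc (m + 1) (m + 1 + i), (1 + (k : ℝ)⁻¹) ^ (-s) :=
        prod_le_prod (fun k hk => hf0 k (mem_Icc.1 hk).1)
          fun k hk => hf k (mem_Icc.1 hk).1
    _ = (((m + 2 + i : ℕ) : ℝ) / (m + 1)) ^ (-s) := by
        rw [finsetProd_rpow _ _ (fun k _ => by positivity), prod_Icc_one_add_inv]
        push_cast; rfl

theorem stmt_7_general (G : ℕ → ℝ) (hG1 : ∀ k, G k ≤ 1) (η : ℝ)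
    (N : ℕ) (htail : ∀ k : ℕ, N ≤ k → η < (k : ℝ) * G k)
    (p : ℝ) (hp : 0 < p) (hp1 : p < 1) (j : ℕ) (hjN : N ≤ j)
    (hpjη : 1 < p * j * η) :
    Summable (fun i : ℕ =>
        ∏ k ∈ Finset.Icc (j + 1) (j + 1 + i), (1 - p * G k) ^ j) := by
  have hpG : ∀ k, p * G k ≤ 1 := fun k =>
    (mul_le_of_le_one_right hp.le (hG1 k)).trans hp1.le
  refine summable_prod_Icc_of_le_one_add_inv_rpow_neg hpjη j
    (fun k _ => pow_nonneg (by linarith [hpG k]) j) fun k hk => ?_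
  have hk0 : (0 : ℝ) < k := by exact_mod_cast (Nat.zero_le j).trans_lt hk
  have hηk : p * j * η ≤ j * (p * G k) * k := by
    nlinarith [htail k (by omega), (by positivity : (0 : ℝ) ≤ p * j)]
  calc (1 - p * G k) ^ j ≤ exp (-(j * (p * G k))) := one_sub_pow_le_exp_neg_mul (hpG k) j
    _ ≤ exp (-(p * j * η / k)) := by
      gcongr
      rwa [div_le_iff₀ hk0]
    _ ≤ (1 + (k : ℝ)⁻¹) ^ (-(p * j * η)) :=
      exp_neg_div_le_one_add_inv_rpow_neg hk0 (by linarith)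

/-- If `G : ℕ → [0,1]` is nonincreasing, `liminf j·G(j) > η > 0` (so `k·G(k) > η` for
`k ≥ N`), `p ∈ (0,1)`, `j ≥ N` and `p·j·η > 1`, then the series
`∑_{i > j} ∏_{k=j+1}^{i} (1 - p·G(k))^j` converges. -/
theorem stmt_7 (G : ℕ → ℝ) (hG0 : ∀ k, 0 ≤ G k) (hG1 : ∀ k, G k ≤ 1)
    (hmono : Antitone G) (η : ℝ) (hη : 0 < η)
    (hliminf : η < Filter.liminf (fun k : ℕ => (k : ℝ) * G k) atTop)
    (N : ℕ) (htail : ∀ k : ℕ, N ≤ k → η < (k : ℝ) * G k)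
    (p : ℝ) (hp : 0 < p) (hp1 : p < 1) (j : ℕ) (hjN : N ≤ j)
    (hpjη : 1 < p * j * η) :
    Summable (fun i : ℕ =>
        ∏ k ∈ Finset.Icc (j + 1) (j + 1 + i), (1 - p * G k) ^ j) :=
  stmt_7_general G hG1 η N htail p hp hp1 j hjN hpjη
end

section
/- In the Poisson Boolean model on ℝ^d with intensity λ > 0 and i.i.d. cube radii ρ_i, if E(ρ₁^d) = ∞ then the covered region C equals ℝ^d almost surely (Hall's theorem, Theorem 1.1). -/
/-!
Fix the unit cubes `q + [0,1]^d` with `q ∈ ℤ^d`; they cover `ℝ^d`, so it suffices that almost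
surely each of them lies inside some cube `xᵢ + [0,ρᵢ]^d`. The marks `(p, r)` whose cube contains
`q + [0,1]^d` form a set of intensity measure `∫ (r - 1)₊^d dν(r)`, which is infinite because
`E(ρ^d) = ∞`. Exhausting it by sets of finite but arbitrarily large measure, the void
probabilities `exp(-λ ·)` show that with probability one some mark falls into it.
-/

open MeasureTheory Filter Topology

theorem ENNReal.add_pow_le_two_pow_mul (a b : ENNReal) (n : ℕ) :
    (a + b) ^ n ≤ 2 ^ n * (a ^ n + b ^ n) :=
  calc (a + b) ^ n ≤ (2 * max a b) ^ n := by
        gcongr; rw [two_mul]; exact add_le_add le_sup_left le_sup_right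
    _ = 2 ^ n * max (a ^ n) (b ^ n) := by rw [mul_pow, (pow_left_mono n).map_max]
    _ ≤ 2 ^ n * (a ^ n + b ^ n) := by gcongr; exact max_le le_self_add le_add_self

theorem lintegral_ofReal_sub_pow_eq_top {ν : Measure ℝ} [IsFiniteMeasure ν] {n : ℕ}
    (h : ∫⁻ r, ENNReal.ofReal r ^ n ∂ν = ⊤) (c : ℝ) :
    ∫⁻ r, ENNReal.ofReal (r - c) ^ n ∂ν = ⊤ := by
  by_contra hfin
  have hle : ∫⁻ r, ENNReal.ofReal r ^ n ∂ν
      ≤ 2 ^ n * (∫⁻ r, ENNReal.ofReal (r - c) ^ n ∂ν + ENNReal.ofReal c ^ n * ν Set.univ) :=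
    calc ∫⁻ r, ENNReal.ofReal r ^ n ∂ν
        ≤ ∫⁻ r, 2 ^ n * (ENNReal.ofReal (r - c) ^ n + ENNReal.ofReal c ^ n) ∂ν := by
          refine lintegral_mono fun r => le_trans ?_ (ENNReal.add_pow_le_two_pow_mul _ _ n)
          gcongr
          simpa using ENNReal.ofReal_add_le (p := r - c) (q := c)
      _ = _ := by
          rw [lintegral_const_mul' _ _ (by simp), lintegral_add_right _ measurable_const,
            lintegral_const]
  rw [h, top_le_iff] at hle
  exact ENNReal.mul_ne_top (by simp) (ENNReal.add_ne_top.2 ⟨hfin, by finiteness⟩) hle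

theorem measure_forall_notMem_eq_zero_of_measure_eq_top {α ι Ω : Type*} [MeasurableSpace α]
    [MeasurableSpace Ω] {μ : Measure Ω} {m : Measure α} [SigmaFinite m] {X : ι → Ω → α}
    {lam : ℝ} (hlam : 0 < lam)
    (hvoid : ∀ B : Set α, MeasurableSet B → m B < ⊤ →
      μ {ω | ∀ i, X i ω ∉ B} = ENNReal.ofReal (Real.exp (-(lam * (m B).toReal))))
    {A : Set α} (hA : MeasurableSet A) (hAtop : m A = ⊤) :
    μ {ω | ∀ i, X i ω ∉ A} = 0 := by
  have hbound : ∀ M : ℝ, μ {ω | ∀ i, X i ω ∉ A} ≤ ENNReal.ofReal (Real.exp (-(lam * M))) := by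
    intro M
    obtain ⟨B, hB, hBA, hMB, hBfin⟩ :=
      Measure.exists_subset_measure_lt_top hA (hAtop ▸ ENNReal.ofReal_lt_top : ENNReal.ofReal M < m A)
    calc μ {ω | ∀ i, X i ω ∉ A} ≤ μ {ω | ∀ i, X i ω ∉ B} :=
          measure_mono fun ω hω i hi => hω i (hBA hi)
      _ = ENNReal.ofReal (Real.exp (-(lam * (m B).toReal))) := hvoid B hB hBfin
      _ ≤ ENNReal.ofReal (Real.exp (-(lam * M))) := by
          gcongr
          exact (ENNReal.ofReal_le_iff_le_toReal hBfin.ne).1 hMB.le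
  have htend : Tendsto (fun M : ℝ => ENNReal.ofReal (Real.exp (-(lam * M)))) atTop (𝓝 0) := by
    simpa using ENNReal.tendsto_ofReal
      (Real.tendsto_exp_neg_atTop_nhds_zero.comp (tendsto_id.const_mul_atTop hlam))
  exact nonpos_iff_eq_zero.1 (ge_of_tendsto' htend hbound)

section CoveringMarks

variable {ι : Type*}

/-- The marks `(p, r)` whose cube `p + [0, r]^ι` contains the cube `q + [0, s]^ι`. -/
def coveringMarks (q : ι → ℝ) (s : ℝ) : Set ((ι → ℝ) × ℝ) :=
  {pr | ∀ k, pr.1 k ≤ q k ∧ q k + s ≤ pr.1 k + pr.2}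

theorem measurableSet_coveringMarks [Countable ι] (q : ι → ℝ) (s : ℝ) :
    MeasurableSet (coveringMarks q s) := by
  simp only [coveringMarks, Set.ofPred_forall, Set.ofPred_and]
  exact MeasurableSet.iInter fun k =>
    (measurableSet_le (by fun_prop) (by fun_prop)).inter
      (measurableSet_le (by fun_prop) (by fun_prop))

theorem volume_prod_coveringMarks [Fintype ι] (q : ι → ℝ) (s : ℝ) (ν : Measure ℝ)
    [SFinite ν] :
    (volume.prod ν) (coveringMarks q s) = ∫⁻ r, ENNReal.ofReal (r - s) ^ Fintype.card ι ∂ν := by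
  rw [Measure.prod_apply_symm (measurableSet_coveringMarks q s)]
  refine lintegral_congr fun r => ?_
  have hsection : (fun p => (p, r)) ⁻¹' coveringMarks q s = Set.Icc (q + fun _ => s - r) q := by
    ext p
    simp only [coveringMarks, Set.mem_preimage, Set.mem_ofPred_eq, Set.mem_Icc, Pi.le_def,
      Pi.add_apply, ← forall_and]
    exact forall_congr' fun k => ⟨fun h => ⟨by linarith, h.1⟩, fun h => ⟨h.2, by linarith⟩⟩
  rw [hsection, Real.volume_Icc_pi]
  simp [Finset.prod_const]

theorem mem_cube_of_mem_coveringMarks {q z : ι → ℝ} {s : ℝ} {pr : (ι → ℝ) × ℝ}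
    (hpr : pr ∈ coveringMarks q s) (hz : ∀ k, q k ≤ z k ∧ z k ≤ q k + s) (k : ι) :
    pr.1 k ≤ z k ∧ z k ≤ pr.1 k + pr.2 :=
  ⟨(hpr k).1.trans (hz k).1, (hz k).2.trans (hpr k).2⟩

end CoveringMarks

theorem stmt_9_general {Ω : Type*} [MeasurableSpace Ω] (μ : Measure Ω) [IsProbabilityMeasure μ]
    (d : ℕ) (lam : ℝ) (hlam : 0 < lam)
    (x : ℕ → Ω → (Fin d → ℝ)) (R : ℕ → Ω → ℝ)
    (ν : Measure ℝ) [IsProbabilityMeasure ν] (hνpos : ν (Set.Iic 0) = 0)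
    (hvoid : ∀ A : Set ((Fin d → ℝ) × ℝ), MeasurableSet A →
      ((volume : Measure (Fin d → ℝ)).prod ν) A < ⊤ →
      μ {ω | ∀ i, (x i ω, R i ω) ∉ A}
        = ENNReal.ofReal (Real.exp (-(lam * (((volume : Measure (Fin d → ℝ)).prod ν) A).toReal))))
    (hmom : ∫⁻ r, ENNReal.ofReal (r ^ d) ∂ν = ⊤) :
    μ {ω | (⋃ i, {y : Fin d → ℝ | ∀ k, x i ω k ≤ y k ∧ y k ≤ x i ω k + R i ω})
        = Set.univ} = 1 := by
  have hmom_pow : ∫⁻ r, ENNReal.ofReal r ^ d ∂ν = ⊤ := by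
    rw [← hmom]
    refine lintegral_congr_ae ?_
    filter_upwards [measure_eq_zero_iff_ae_notMem.1 hνpos] with r hr
    rw [ENNReal.ofReal_pow ((not_le.1 hr).le)]
  have hcovered : ∀ q : Fin d → ℤ,
      ∀ᵐ ω ∂μ, ∃ i, (x i ω, R i ω) ∈ coveringMarks (fun k => (q k : ℝ)) 1 := by
    intro q
    have hnull := measure_forall_notMem_eq_zero_of_measure_eq_top hlam hvoid
      (measurableSet_coveringMarks (fun k => (q k : ℝ)) 1) (by
        rw [volume_prod_coveringMarks, Fintype.card_fin]
        exact lintegral_ofReal_sub_pow_eq_top hmom_pow 1)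
    filter_upwards [measure_eq_zero_iff_ae_notMem.1 hnull] with ω hω
    simpa using hω
  have hcover : ∀ᵐ ω ∂μ,
      (⋃ i, {y : Fin d → ℝ | ∀ k, x i ω k ≤ y k ∧ y k ≤ x i ω k + R i ω}) = Set.univ := by
    filter_upwards [ae_all_iff.2 hcovered] with ω hω
    refine Set.eq_univ_of_forall fun z => Set.mem_iUnion.2 ?_
    obtain ⟨i, hi⟩ := hω fun k => ⌊z k⌋
    exact ⟨i, mem_cube_of_mem_coveringMarks hi
      fun k => ⟨Int.floor_le _, (Int.lt_floor_add_one _).le⟩⟩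
  rw [measure_congr (ae_eq_univ.2 hcover), measure_univ]

/-- Hall's theorem (Theorem 1.1, coverage direction): in the Poisson Boolean model on
`ℝ^d` with intensity `λ > 0` and i.i.d. cubes `[0,ρ]^d` whose radius law `ν` satisfies
`E(ρ₁^d) = ∞`, the covered region `C = ⋃ᵢ (xᵢ + [0,ρᵢ]^d)` equals `ℝ^d` almost surely.
The marked Poisson process is specified through its void probabilities. -/
theorem stmt_9 {Ω : Type*} [MeasurableSpace Ω] (μ : Measure Ω) [IsProbabilityMeasure μ]
    (d : ℕ) (hd : 1 ≤ d) (lam : ℝ) (hlam : 0 < lam)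
    (x : ℕ → Ω → (Fin d → ℝ)) (R : ℕ → Ω → ℝ)
    (hxmeas : ∀ i, Measurable (x i)) (hRmeas : ∀ i, Measurable (R i))
    (ν : Measure ℝ) [IsProbabilityMeasure ν] (hνpos : ν (Set.Iic 0) = 0)
    (hvoid : ∀ A : Set ((Fin d → ℝ) × ℝ), MeasurableSet A →
      ((volume : Measure (Fin d → ℝ)).prod ν) A < ⊤ →
      μ {ω | ∀ i, (x i ω, R i ω) ∉ A}
        = ENNReal.ofReal (Real.exp (-(lam * (((volume : Measure (Fin d → ℝ)).prod ν) A).toReal))))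
    (hmom : ∫⁻ r, ENNReal.ofReal (r ^ d) ∂ν = ⊤) :
    μ {ω | (⋃ i, {y : Fin d → ℝ | ∀ k, x i ω k ≤ y k ∧ y k ≤ x i ω k + R i ω})
        = Set.univ} = 1 :=
  stmt_9_general μ d lam hlam x R ν hνpos hvoid hmom
end

section
/- Let X₁, X₂, ... be a {0,1}-valued Markov chain with transition probabilities p_{ij}, 0 < p00, p10 < 1, and let ρ₁, ρ₂, ... be i.i.d. positive-integer-valued random variables with distribution function F, independent of the chain. Let C = ∪_{i: X_i = 1}(i + [0,ρ_i]) and A_k = {k ∉ C}. Then setting P₀(A_k) = P(A_k | X₁ = 0) and P₁(A_k) = P(A_k | X₁ = 1), the recursions P₀(A_{k+1}) = p00·P₀(A_k) + p01·P₁(A_k) and P₁(A_{k+1}) = F(k-1)·[p10·P₀(A_k) + p11·P₁(A_k)] hold for all k ≥ 1. -/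
/-!
Condition on the first state. Given the whole state string `X₁ … X_{k+1}`, the event `A_{k+1}`
says that every occupied site `i ≤ k + 1` has `i + ρᵢ < k + 1`; by independence of the radii and
the Markov product formula, its probability is the initial probability times a weight that is a
product of transition probabilities and of the factors `P(ρ < k + 1 - i)` over occupied sites.
Peeling off the first site turns the weight of `A_{k+1}` into `F(k - 1)` (if `X₁ = 1`) times a
transition probability times the weight of `A_k` for the chain started from `X₂`, and summing over
`X₂` gives both recursions.
-/

open MeasureTheory ProbabilityTheory
open scoped ENNReal

section PathWeight

variable {R : Type*} [CommSemiring R] (q : Bool → Bool → R) (c : ℕ → R)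

/-- `v j` is the state of site `j + 1`, `q` the transition weight and `c t` the weight of an
occupied site at distance `t` from site `n + 1` not reaching it. -/
def pathWeight (n : ℕ) (v : Fin (n + 1) → Bool) : R :=
  (∏ j : Fin n, q (v j.castSucc) (v j.succ)) * ∏ j : Fin (n + 1), if v j then c (n - j) else 1

def uncoveredWeight (n : ℕ) (a : Bool) : R :=
  ∑ w : Fin n → Bool, pathWeight q c n (Fin.cons a w)

theorem pathWeight_cons (n : ℕ) (a : Bool) (w : Fin (n + 1) → Bool) :
    pathWeight q c (n + 1) (Fin.cons a w)
      = (if a then c (n + 1) else 1) * (q a (w 0) * pathWeight q c n w) := by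
  simp only [pathWeight, Fin.prod_univ_succ (n := n + 1), Fin.prod_univ_succ (n := n),
    Fin.cons_zero, Fin.cons_succ, ← Fin.succ_castSucc, Fin.castSucc_zero, Fin.val_zero,
    Fin.val_succ, Nat.sub_zero, Nat.add_sub_add_right]
  ring

theorem uncoveredWeight_succ (n : ℕ) (a : Bool) :
    uncoveredWeight q c (n + 1) a
      = (if a then c (n + 1) else 1) * ∑ b, q a b * uncoveredWeight q c n b := by
  simp only [uncoveredWeight, pathWeight_cons, ← Finset.mul_sum]
  rw [← (Fin.consEquiv fun _ => Bool).sum_comp, Fintype.sum_prod_type]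
  simp [Fin.consEquiv, Finset.mul_sum]

end PathWeight

section MarkovChain

variable {Ω α : Type*}

def prefixEvent (X : ℕ → Ω → α) {m : ℕ} (v : Fin m → α) : Set Ω :=
  {ω | ∀ j : Fin m, X (j + 1) ω = v j}

theorem prefixEvent_eq_setOf_forall (X : ℕ → Ω → α) {m : ℕ} (v : Fin m → α) (b : ℕ → α)
    (hb : ∀ j : Fin m, b (j + 1) = v j) :
    prefixEvent X v = {ω | ∀ i, 1 ≤ i → i ≤ m → X i ω = b i} := by
  ext ω
  simp only [prefixEvent, Set.mem_ofPred_eq, ← hb]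
  constructor
  · intro h i hi1 him
    obtain ⟨j, rfl⟩ : ∃ j : ℕ, i = j + 1 := ⟨i - 1, by omega⟩
    exact h ⟨j, by omega⟩
  · exact fun h j => h _ (by omega) (by omega)

theorem measure_prefixEvent [MeasurableSpace Ω] (μ : Measure Ω) (X : ℕ → Ω → α)
    (ptrans : α → α → ℝ)
    (hMarkov : ∀ (n : ℕ), 1 ≤ n → ∀ b : ℕ → α,
      μ {ω | ∀ i, 1 ≤ i → i ≤ n + 1 → X i ω = b i}
        = μ {ω | ∀ i, 1 ≤ i → i ≤ n → X i ω = b i} * ENNReal.ofReal (ptrans (b n) (b (n + 1))))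
    (n : ℕ) (v : Fin (n + 1) → α) :
    μ (prefixEvent X v)
      = μ {ω | X 1 ω = v 0} * ∏ j : Fin n, ENNReal.ofReal (ptrans (v j.castSucc) (v j.succ)) := by
  induction n with
  | zero => simp [prefixEvent, Fin.forall_fin_one]
  | succ n ih =>
    let b : ℕ → α := fun i => if h : i - 1 < n + 2 then v ⟨i - 1, h⟩ else v 0
    have hb : ∀ j : Fin (n + 2), b (j + 1) = v j := fun j => by simp [b, j.isLt]
    rw [prefixEvent_eq_setOf_forall X v b hb, hMarkov (n + 1) (by omega),
      ← prefixEvent_eq_setOf_forall X (Fin.init v) b (fun j => by simp [Fin.init, ← hb]), ih,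
      Fin.prod_univ_castSucc, mul_assoc]
    rw [← hb (Fin.last n).castSucc, ← hb (Fin.last n).succ]
    rfl

theorem measure_inter_eq_sum_prefixEvent [MeasurableSpace Ω] [Fintype α] [MeasurableSpace α]
    [MeasurableSingletonClass α] (μ : Measure Ω) (X : ℕ → Ω → α) (hXmeas : ∀ i, Measurable (X i))
    (B : Set Ω) (n : ℕ) (a : α) :
    μ (B ∩ {ω | X 1 ω = a}) = ∑ w : Fin n → α, μ (B ∩ prefixEvent X (Fin.cons a w)) := by
  set tail : Ω → Fin n → α := fun ω j => X (j + 1 + 1) ω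
  have htail : Measurable tail := measurable_pi_lambda _ fun j => hXmeas _
  have hfiber : ∀ w, B ∩ prefixEvent X (Fin.cons a w) = tail ⁻¹' {w} ∩ (B ∩ {ω | X 1 ω = a}) := by
    intro w
    ext ω
    simp only [prefixEvent, tail, Set.mem_inter_iff, Set.mem_preimage, Set.mem_singleton_iff,
      Set.mem_ofPred_eq, Fin.forall_fin_succ, Fin.cons_zero, Fin.cons_succ, Fin.val_zero,
      Fin.val_succ, funext_iff]
    tauto
  simp_rw [hfiber, ← Measure.restrict_apply (htail (measurableSet_singleton _))]
  rw [sum_measure_preimage_singleton _ fun w _ => htail (measurableSet_singleton w)]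
  simp

end MarkovChain

section Coverage

variable {Ω : Type*}

def uncovered (X : ℕ → Ω → Bool) (ρ : ℕ → Ω → ℕ) (k : ℕ) : Set Ω :=
  {ω | ¬ ∃ i : ℕ, 1 ≤ i ∧ X i ω = true ∧ i ≤ k ∧ k ≤ i + ρ i ω}

def radiusLtProb (F : ℕ → ℝ) : ℕ → ℝ≥0∞
  | 0 => 0
  | t + 1 => ENNReal.ofReal (F t)

theorem uncovered_inter_prefixEvent (X : ℕ → Ω → Bool) (ρ : ℕ → Ω → ℕ) (n : ℕ)
    (v : Fin (n + 1) → Bool) :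
    uncovered X ρ (n + 1) ∩ prefixEvent X v
      = prefixEvent X v ∩ ⋂ j ∈ Finset.univ.filter (v · = true), {ω | ρ (j + 1) ω < n - j} := by
  ext ω
  simp only [uncovered, prefixEvent, Set.mem_inter_iff, Set.mem_ofPred_eq, Set.mem_iInter,
    Finset.mem_filter, Finset.mem_univ, true_and]
  refine and_comm.trans (and_congr_right fun hX => ?_)
  constructor
  · intro hunc j hj
    by_contra! hle
    exact hunc ⟨j + 1, by omega, by rw [hX, hj], by omega, by omega⟩
  · rintro hshort ⟨i, hi1, hXi, hin, hcov⟩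
    obtain ⟨j, rfl⟩ : ∃ j : Fin (n + 1), i = j + 1 := ⟨⟨i - 1, by omega⟩, by rw [Fin.val_mk]; omega⟩
    have := hshort j (by rw [← hX, hXi])
    omega

variable [MeasurableSpace Ω]

theorem measure_radius_lt (μ : Measure Ω) (ρ : ℕ → Ω → ℕ) (F : ℕ → ℝ)
    (hρdist : ∀ i k, μ {ω | ρ i ω ≤ k} = ENNReal.ofReal (F k)) (i t : ℕ) :
    μ {ω | ρ i ω < t} = radiusLtProb F t := by
  cases t with
  | zero => simp [radiusLtProb]
  | succ t => simp only [Nat.lt_succ_iff, hρdist, radiusLtProb]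

theorem measure_iInter_radius_lt (μ : Measure Ω) (ρ : ℕ → Ω → ℕ) (F : ℕ → ℝ)
    (hρiid : iIndepFun ρ μ) (hρdist : ∀ i k, μ {ω | ρ i ω ≤ k} = ENNReal.ofReal (F k))
    {m : ℕ} (S : Finset (Fin m)) (t : Fin m → ℕ) :
    μ (⋂ j ∈ S, {ω | ρ (j + 1) ω < t j}) = ∏ j ∈ S, radiusLtProb F (t j) := by
  have hindep : iIndepFun (fun j : Fin m => ρ (j + 1)) μ :=
    hρiid.precomp fun j k h => Fin.ext (by simpa using h)
  rw [← Finset.prod_congr rfl fun (j : Fin m) _ => measure_radius_lt μ ρ F hρdist (j + 1) (t j)]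
  exact hindep.measure_inter_preimage_eq_mul S (sets := fun j => Set.Iio (t j))
    fun _ _ => measurableSet_Iio

theorem measure_uncovered_inter_prefixEvent (μ : Measure Ω) (X : ℕ → Ω → Bool)
    (ρ : ℕ → Ω → ℕ) (ptrans : Bool → Bool → ℝ)
    (hMarkov : ∀ (n : ℕ), 1 ≤ n → ∀ b : ℕ → Bool,
      μ {ω | ∀ i, 1 ≤ i → i ≤ n + 1 → X i ω = b i}
        = μ {ω | ∀ i, 1 ≤ i → i ≤ n → X i ω = b i} * ENNReal.ofReal (ptrans (b n) (b (n + 1))))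
    (F : ℕ → ℝ) (hρiid : iIndepFun ρ μ)
    (hρdist : ∀ i k, μ {ω | ρ i ω ≤ k} = ENNReal.ofReal (F k))
    (hXρindep : IndepFun (fun ω i => X i ω : Ω → ℕ → Bool) (fun ω i => ρ i ω : Ω → ℕ → ℕ) μ)
    (n : ℕ) (v : Fin (n + 1) → Bool) :
    μ (uncovered X ρ (n + 1) ∩ prefixEvent X v)
      = μ {ω | X 1 ω = v 0}
        * pathWeight (fun a b => ENNReal.ofReal (ptrans a b)) (radiusLtProb F) n v := by
  have hX : MeasurableSet[MeasurableSpace.comap (fun ω i => X i ω) inferInstance]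
      (prefixEvent X v) :=
    ⟨{x | ∀ j : Fin (n + 1), x (j + 1) = v j}, by measurability, rfl⟩
  have hρ : MeasurableSet[MeasurableSpace.comap (fun ω i => ρ i ω) inferInstance]
      (⋂ j ∈ Finset.univ.filter (v · = true), {ω | ρ (j + 1) ω < n - j}) :=
    ⟨{x | ∀ j ∈ Finset.univ.filter (v · = true), x (j + 1) < n - j}, by measurability,
      by ext; simp⟩
  rw [uncovered_inter_prefixEvent, hXρindep.meas_inter hX hρ,
    measure_prefixEvent μ X ptrans hMarkov, measure_iInter_radius_lt μ ρ F hρiid hρdist,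
    Finset.prod_filter, pathWeight, mul_assoc]

theorem cond_uncovered_eq_uncoveredWeight (μ : Measure Ω) [IsFiniteMeasure μ]
    (X : ℕ → Ω → Bool) (ρ : ℕ → Ω → ℕ) (hXmeas : ∀ i, Measurable (X i))
    (ptrans : Bool → Bool → ℝ)
    (hMarkov : ∀ (n : ℕ), 1 ≤ n → ∀ b : ℕ → Bool,
      μ {ω | ∀ i, 1 ≤ i → i ≤ n + 1 → X i ω = b i}
        = μ {ω | ∀ i, 1 ≤ i → i ≤ n → X i ω = b i} * ENNReal.ofReal (ptrans (b n) (b (n + 1))))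
    (F : ℕ → ℝ) (hρiid : iIndepFun ρ μ)
    (hρdist : ∀ i k, μ {ω | ρ i ω ≤ k} = ENNReal.ofReal (F k))
    (hXρindep : IndepFun (fun ω i => X i ω : Ω → ℕ → Bool) (fun ω i => ρ i ω : Ω → ℕ → ℕ) μ)
    (a : Bool) (hpos : μ {ω | X 1 ω = a} ≠ 0) (n : ℕ) :
    μ[uncovered X ρ (n + 1) | {ω | X 1 ω = a}]
      = uncoveredWeight (fun a b => ENNReal.ofReal (ptrans a b)) (radiusLtProb F) n a := by
  have hfirst : MeasurableSet {ω | X 1 ω = a} := hXmeas 1 (measurableSet_singleton a)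
  rw [cond_apply hfirst, Set.inter_comm,
    measure_inter_eq_sum_prefixEvent μ X hXmeas _ n a]
  simp only [measure_uncovered_inter_prefixEvent μ X ρ ptrans hMarkov F hρiid hρdist hXρindep,
    Fin.cons_zero, ← Finset.mul_sum, ← mul_assoc,
    ENNReal.inv_mul_cancel hpos (measure_ne_top μ _), one_mul]
  rfl

end Coverage

theorem stmt_11_general {Ω : Type*} [MeasurableSpace Ω] (μ : Measure Ω) [IsProbabilityMeasure μ]
    (X : ℕ → Ω → Bool) (ρ : ℕ → Ω → ℕ)
    (hXmeas : ∀ i, Measurable (X i))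
    (p00 p01 p10 p11 : ℝ)
    (ptrans : Bool → Bool → ℝ)
    (hptrans : ptrans false false = p00 ∧ ptrans false true = p01 ∧
      ptrans true false = p10 ∧ ptrans true true = p11)
    -- homogeneous Markov property of the chain `X₁, X₂, …` via finite-dimensional laws
    (hMarkov : ∀ (n : ℕ), 1 ≤ n → ∀ b : ℕ → Bool,
      μ {ω | ∀ i, 1 ≤ i → i ≤ n + 1 → X i ω = b i}
        = μ {ω | ∀ i, 1 ≤ i → i ≤ n → X i ω = b i} * ENNReal.ofReal (ptrans (b n) (b (n + 1))))
    -- the radii are i.i.d. with distribution function `F`, take positive integer values,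
    -- and are independent of the chain
    (F : ℕ → ℝ) (hρiid : iIndepFun ρ μ)
    (hρdist : ∀ i k, μ {ω | ρ i ω ≤ k} = ENNReal.ofReal (F k))
    (hXρindep : IndepFun (fun ω i => X i ω : Ω → ℕ → Bool) (fun ω i => ρ i ω : Ω → ℕ → ℕ) μ)
    (hpos0 : μ {ω | X 1 ω = false} ≠ 0) (hpos1 : μ {ω | X 1 ω = true} ≠ 0)
    (A : ℕ → Set Ω)
    (hA : ∀ k, A k = {ω | ¬ ∃ i : ℕ, 1 ≤ i ∧ X i ω = true ∧ i ≤ k ∧ k ≤ i + ρ i ω}) :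
    ∀ k : ℕ, 1 ≤ k →
      (μ[|{ω | X 1 ω = false}]) (A (k + 1))
          = ENNReal.ofReal p00 * (μ[|{ω | X 1 ω = false}]) (A k)
            + ENNReal.ofReal p01 * (μ[|{ω | X 1 ω = true}]) (A k)
      ∧ (μ[|{ω | X 1 ω = true}]) (A (k + 1))
          = ENNReal.ofReal (F (k - 1)) *
              (ENNReal.ofReal p10 * (μ[|{ω | X 1 ω = false}]) (A k)
                + ENNReal.ofReal p11 * (μ[|{ω | X 1 ω = true}]) (A k)) := by
  intro k hk
  obtain ⟨n, rfl⟩ : ∃ n, k = n + 1 := ⟨k - 1, by omega⟩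
  obtain rfl : A = uncovered X ρ := funext hA
  obtain ⟨hff, hft, htf, htt⟩ := hptrans
  have hcond := cond_uncovered_eq_uncoveredWeight μ X ρ hXmeas ptrans hMarkov F hρiid hρdist
    hXρindep
  simp only [hcond false hpos0, hcond true hpos1, uncoveredWeight_succ, Fintype.sum_bool,
    hff, hft, htf, htt, radiusLtProb, Nat.add_sub_cancel, Bool.false_eq_true, if_false,
    if_true, one_mul]
  exact ⟨add_comm _ _, by rw [add_comm]⟩

/-- Recurrence relations for the uncovered-site probabilities in the one-dimensional
Markov coverage model: `X₁, X₂, …` is a `{0,1}`-valued homogeneous Markov chain with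
transition probabilities `p_{ab}`, `ρ₁, ρ₂, …` are i.i.d. positive-integer radii with
distribution function `F`, independent of the chain, and `A_k` is the event that `k` is
not covered by `C = ⋃_{i : Xᵢ = 1} [i, i + ρᵢ]`. With `P_a(A_k) = P(A_k ∣ X₁ = a)`,
`P₀(A_{k+1}) = p₀₀·P₀(A_k) + p₀₁·P₁(A_k)` and
`P₁(A_{k+1}) = F(k-1)·(p₁₀·P₀(A_k) + p₁₁·P₁(A_k))` for all `k ≥ 1`. -/
theorem stmt_11 {Ω : Type*} [MeasurableSpace Ω] (μ : Measure Ω) [IsProbabilityMeasure μ]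
    (X : ℕ → Ω → Bool) (ρ : ℕ → Ω → ℕ)
    (hXmeas : ∀ i, Measurable (X i)) (hρmeas : ∀ i, Measurable (ρ i))
    (p00 p01 p10 p11 : ℝ) (h00 : 0 < p00) (h001 : p00 < 1) (h10 : 0 < p10) (h101 : p10 < 1)
    (hrow0 : p00 + p01 = 1) (hrow1 : p10 + p11 = 1)
    (ptrans : Bool → Bool → ℝ)
    (hptrans : ptrans false false = p00 ∧ ptrans false true = p01 ∧
      ptrans true false = p10 ∧ ptrans true true = p11)
    -- homogeneous Markov property of the chain `X₁, X₂, …` via finite-dimensional laws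
    (hMarkov : ∀ (n : ℕ), 1 ≤ n → ∀ b : ℕ → Bool,
      μ {ω | ∀ i, 1 ≤ i → i ≤ n + 1 → X i ω = b i}
        = μ {ω | ∀ i, 1 ≤ i → i ≤ n → X i ω = b i} * ENNReal.ofReal (ptrans (b n) (b (n + 1))))
    -- the radii are i.i.d. with distribution function `F`, take positive integer values,
    -- and are independent of the chain
    (F : ℕ → ℝ) (hρiid : iIndepFun ρ μ)
    (hρdist : ∀ i k, μ {ω | ρ i ω ≤ k} = ENNReal.ofReal (F k))
    (hρpos : ∀ i ω, 1 ≤ ρ i ω)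
    (hXρindep : IndepFun (fun ω i => X i ω : Ω → ℕ → Bool) (fun ω i => ρ i ω : Ω → ℕ → ℕ) μ)
    (hpos0 : μ {ω | X 1 ω = false} ≠ 0) (hpos1 : μ {ω | X 1 ω = true} ≠ 0)
    (A : ℕ → Set Ω)
    (hA : ∀ k, A k = {ω | ¬ ∃ i : ℕ, 1 ≤ i ∧ X i ω = true ∧ i ≤ k ∧ k ≤ i + ρ i ω}) :
    ∀ k : ℕ, 1 ≤ k →
      (μ[|{ω | X 1 ω = false}]) (A (k + 1))
          = ENNReal.ofReal p00 * (μ[|{ω | X 1 ω = false}]) (A k)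
            + ENNReal.ofReal p01 * (μ[|{ω | X 1 ω = true}]) (A k)
      ∧ (μ[|{ω | X 1 ω = true}]) (A (k + 1))
          = ENNReal.ofReal (F (k - 1)) *
              (ENNReal.ofReal p10 * (μ[|{ω | X 1 ω = false}]) (A k)
                + ENNReal.ofReal p11 * (μ[|{ω | X 1 ω = true}]) (A k)) :=
  stmt_11_general μ X ρ hXmeas p00 p01 p10 p11 ptrans hptrans hMarkov F hρiid hρdist hXρindep hpos0
    hpos1 A hA
end

section
/- Fix j ≥ 1 and let A(i,j), i ≥ 1, be the events that (i,j) is uncovered in the i.i.d. discrete Boolean model on ℕ² (sites open independently with probability p, i.i.d. integer radii ρ with squares i + [0,ρ_i]²). Then for k ≥ i, P(A(k,j) ∩ A(i,j)) = P(A(k-i,j))·P(A(i,j)). -/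
open MeasureTheory ProbabilityTheory

/-!
Write `k = n + i`. A site left of column `i` whose square reaches `(k, j)` also reaches `(i, j)`,
so on `A(i,j)` the event `A(k,j)` only asks that no site in the columns `(i, k]` cover `(k, j)`.
That event depends on sites disjoint from those of `A(i,j)`, hence is independent of it, and
shifting those columns by `-i` turns it into `A(n,j)` without changing its probability, since
the sites are identically distributed.
-/

namespace ProbabilityTheory

variable {Ω ι β : Type*} [MeasurableSpace Ω] {μ : Measure Ω} [MeasurableSpace β] {Y : ι → Ω → β}

theorem iIndepFun.measure_biInter_preimage_inter_biInter_preimage (hY : iIndepFun Y μ)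
    {s t : Finset ι} (hst : Disjoint s t) {E F : ι → Set β} (hE : ∀ v, MeasurableSet (E v))
    (hF : ∀ v, MeasurableSet (F v)) :
    μ ((⋂ v ∈ s, Y v ⁻¹' E v) ∩ ⋂ v ∈ t, Y v ⁻¹' F v) =
      μ (⋂ v ∈ s, Y v ⁻¹' E v) * μ (⋂ v ∈ t, Y v ⁻¹' F v) := by
  classical
  have hG : ∀ v, MeasurableSet (s.piecewise E F v) := fun v => by
    by_cases hv : v ∈ s <;> simp [hv, hE v, hF v]
  have hunion : ⋂ v ∈ s ∪ t, Y v ⁻¹' s.piecewise E F v =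
      (⋂ v ∈ s, Y v ⁻¹' E v) ∩ ⋂ v ∈ t, Y v ⁻¹' F v := by
    rw [← Finset.set_biInter_coe, Finset.coe_union, Set.biInter_union]
    congr 1 <;> refine Set.iInter₂_congr fun v hv => ?_
    · simp [Finset.mem_coe.mp hv]
    · simp [Finset.disjoint_right.mp hst hv]
  rw [← hunion, hY.measure_inter_preimage_eq_mul _ fun v _ => hG v, Finset.prod_union hst,
    hY.measure_inter_preimage_eq_mul _ fun v _ => hE v,
    hY.measure_inter_preimage_eq_mul _ fun v _ => hF v]
  congr 1 <;> refine Finset.prod_congr rfl fun v hv => ?_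
  · simp [hv]
  · simp [Finset.disjoint_right.mp hst hv]

theorem iIndepFun.measure_biInter_preimage_comp (hY : iIndepFun Y μ) {f : ι → ι}
    (hf : f.Injective) (hid : ∀ v, IdentDistrib (Y (f v)) (Y v) μ μ) (s : Finset ι)
    {E : ι → Set β} (hE : ∀ v, MeasurableSet (E v)) :
    μ (⋂ v ∈ s, Y (f v) ⁻¹' E v) = μ (⋂ v ∈ s, Y v ⁻¹' E v) := by
  rw [(hY.precomp hf).measure_inter_preimage_eq_mul _ fun v _ => hE v,
    hY.measure_inter_preimage_eq_mul _ fun v _ => hE v]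
  exact Finset.prod_congr rfl fun v _ => (hid v).measure_mem_eq (hE v)

end ProbabilityTheory

namespace DiscreteBooleanModel

open Finset

variable {Ω : Type*}

/-- The states `(open, radius)` of site `v` whose square `v + [0, radius]²` contains `(m, j)`,
provided `v ≤ (m, j)`: that lower constraint is imposed by the index set of `uncoveredBy`. -/
def coverSet (m j : ℕ) (v : ℕ × ℕ) : Set (Bool × ℕ) :=
  {x | x.1 = true ∧ m ≤ v.1 + x.2 ∧ j ≤ v.2 + x.2}

def uncoveredBy (Y : ℕ × ℕ → Ω → Bool × ℕ) (s : Finset (ℕ × ℕ)) (m j : ℕ) : Set Ω :=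
  ⋂ v ∈ s, Y v ⁻¹' (coverSet m j v)ᶜ

theorem setOf_not_covered_eq_uncoveredBy (X : ℕ × ℕ → Ω → Bool) (ρ : ℕ × ℕ → Ω → ℕ)
    (m j : ℕ) :
    {ω | ¬ ∃ k l : ℕ, 1 ≤ k ∧ 1 ≤ l ∧ X (k, l) ω = true ∧
        k ≤ m ∧ m ≤ k + ρ (k, l) ω ∧ l ≤ j ∧ j ≤ l + ρ (k, l) ω} =
      uncoveredBy (fun v ω => (X v ω, ρ v ω)) (Icc 1 m ×ˢ Icc 1 j) m j := by
  ext ω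
  simp only [uncoveredBy, coverSet, Set.mem_ofPred_eq, Set.mem_iInter, mem_product, mem_Icc,
    Set.mem_preimage, Set.mem_compl_iff, Prod.forall]
  grind

theorem uncoveredBy_union (Y : ℕ × ℕ → Ω → Bool × ℕ) (s t : Finset (ℕ × ℕ)) (m j : ℕ) :
    uncoveredBy Y (s ∪ t) m j = uncoveredBy Y s m j ∩ uncoveredBy Y t m j := by
  simp only [uncoveredBy, ← Finset.set_biInter_coe, coe_union, Set.biInter_union]

theorem uncoveredBy_mono (Y : ℕ × ℕ → Ω → Bool × ℕ) (s : Finset (ℕ × ℕ)) {i k : ℕ}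
    (hik : i ≤ k) (j : ℕ) :
    uncoveredBy Y s i j ⊆ uncoveredBy Y s k j := by
  simp only [uncoveredBy, Set.subset_def, Set.mem_iInter, Set.mem_preimage, Set.mem_compl_iff,
    coverSet, Set.mem_ofPred_eq]
  intro ω hω v hv ⟨hopen, hk, hj⟩
  exact hω v hv ⟨hopen, by grind, hj⟩

theorem uncoveredBy_image_shift (Y : ℕ × ℕ → Ω → Bool × ℕ) (s : Finset (ℕ × ℕ)) (i m j : ℕ) :
    uncoveredBy Y (s.image (Prod.map (· + i) id)) (m + i) j =
      uncoveredBy (fun v => Y (Prod.map (· + i) id v)) s m j := by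
  simp only [uncoveredBy, set_biInter_finset_image]
  congr! 4 with v
  simp only [coverSet]
  grind

theorem measure_uncoveredBy_inter [MeasurableSpace Ω] {μ : Measure Ω}
    {Y : ℕ × ℕ → Ω → Bool × ℕ} (hY : iIndepFun Y μ)
    {s t : Finset (ℕ × ℕ)} (hst : Disjoint s t) (m m' j : ℕ) :
    μ (uncoveredBy Y s m j ∩ uncoveredBy Y t m' j) =
      μ (uncoveredBy Y s m j) * μ (uncoveredBy Y t m' j) :=
  hY.measure_biInter_preimage_inter_biInter_preimage hst (fun _ => .of_discrete)
    fun _ => .of_discrete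

theorem measure_uncoveredBy_comp [MeasurableSpace Ω] {μ : Measure Ω}
    {Y : ℕ × ℕ → Ω → Bool × ℕ} (hY : iIndepFun Y μ)
    {f : ℕ × ℕ → ℕ × ℕ} (hf : f.Injective) (hid : ∀ v, IdentDistrib (Y (f v)) (Y v) μ μ)
    (s : Finset (ℕ × ℕ)) (m j : ℕ) :
    μ (uncoveredBy (fun v => Y (f v)) s m j) = μ (uncoveredBy Y s m j) :=
  hY.measure_biInter_preimage_comp hf hid s fun _ => .of_discrete

theorem box_add_eq_union_image_shift (i n j : ℕ) :
    Icc 1 (n + i) ×ˢ Icc 1 j =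
      Icc 1 i ×ˢ Icc 1 j ∪ (Icc 1 n ×ˢ Icc 1 j).image (Prod.map (· + i) id) := by
  ext ⟨a, l⟩
  simp only [mem_union, mem_product, mem_Icc, mem_image, Prod.exists, Prod.map_apply, id_eq,
    Prod.mk.injEq]
  constructor
  · intro h
    by_cases ha : a ≤ i
    · grind
    · exact .inr ⟨a - i, l, by grind⟩
  · grind

theorem disjoint_box_image_shift (i n j : ℕ) :
    Disjoint (Icc 1 i ×ˢ Icc 1 j) ((Icc 1 n ×ˢ Icc 1 j).image (Prod.map (· + i) id)) := by
  simp only [disjoint_left, mem_product, mem_Icc, mem_image, Prod.exists, Prod.map_apply, id_eq]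
  grind

end DiscreteBooleanModel

open DiscreteBooleanModel in
theorem stmt_18_general {Ω : Type*} [MeasurableSpace Ω] (μ : Measure Ω)
    (X : ℕ × ℕ → Ω → Bool) (ρ : ℕ × ℕ → Ω → ℕ)
    (hindep : iIndepFun
      (fun v ω => (X v ω, ρ v ω)) μ)
    (hid : ∀ v w, IdentDistrib (fun ω => (X v ω, ρ v ω)) (fun ω => (X w ω, ρ w ω)) μ μ)
    (A : ℕ → ℕ → Set Ω)
    (hA : ∀ i j, A i j = {ω | ¬ ∃ k l : ℕ, 1 ≤ k ∧ 1 ≤ l ∧ X (k, l) ω = true ∧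
        k ≤ i ∧ i ≤ k + ρ (k, l) ω ∧ l ≤ j ∧ j ≤ l + ρ (k, l) ω})
    (j : ℕ) :
    ∀ i k : ℕ, 1 ≤ i → i ≤ k →
      μ (A k j ∩ A i j) = μ (A (k - i) j) * μ (A i j) := by
  intro i k _ hik
  obtain ⟨n, rfl⟩ := Nat.exists_eq_add_of_le' hik
  have hshift : (Prod.map (· + i) id : ℕ × ℕ → ℕ × ℕ).Injective :=
    (add_left_injective i).prodMap Function.injective_id
  simp only [hA, setOf_not_covered_eq_uncoveredBy, Nat.add_sub_cancel,
    box_add_eq_union_image_shift, uncoveredBy_union]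
  rw [Set.inter_right_comm, Set.inter_eq_right.mpr (uncoveredBy_mono _ _ (Nat.le_add_left i n) j),
    Set.inter_comm, measure_uncoveredBy_inter hindep (disjoint_box_image_shift i n j).symm,
    uncoveredBy_image_shift, measure_uncoveredBy_comp hindep hshift fun v => hid _ v]

/-- Renewal structure along horizontal lines in the i.i.d. discrete Boolean model on `ℕ²`:
with `A(i,j)` the event that `(i,j)` is uncovered, for `k ≥ i ≥ 1` one has
`P(A(k,j) ∩ A(i,j)) = P(A(k-i,j))·P(A(i,j))`. -/
theorem stmt_18 {Ω : Type*} [MeasurableSpace Ω] (μ : Measure Ω) [IsProbabilityMeasure μ]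
    (X : ℕ × ℕ → Ω → Bool) (ρ : ℕ × ℕ → Ω → ℕ)
    (hXmeas : ∀ v, Measurable (X v)) (hρmeas : ∀ v, Measurable (ρ v))
    (hindep : iIndepFun
      (fun v ω => (X v ω, ρ v ω)) μ)
    (p : ℝ) (hp : 0 < p) (hp1 : p < 1)
    (hX : ∀ v, μ {ω | X v ω = true} = ENNReal.ofReal p)
    (hρpos : ∀ v ω, 1 ≤ ρ v ω)
    (hid : ∀ v w, IdentDistrib (fun ω => (X v ω, ρ v ω)) (fun ω => (X w ω, ρ w ω)) μ μ)
    (A : ℕ → ℕ → Set Ω)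
    (hA : ∀ i j, A i j = {ω | ¬ ∃ k l : ℕ, 1 ≤ k ∧ 1 ≤ l ∧ X (k, l) ω = true ∧
        k ≤ i ∧ i ≤ k + ρ (k, l) ω ∧ l ≤ j ∧ j ≤ l + ρ (k, l) ω})
    (j : ℕ) (hj : 1 ≤ j) :
    ∀ i k : ℕ, 1 ≤ i → i ≤ k →
      μ (A k j ∩ A i j) = μ (A (k - i) j) * μ (A i j) :=
  stmt_18_general μ X ρ hindep hid A hA j
end
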